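/- arXiv:math/0502516 — 3 statements merged into one kernel-verified Lean document; each statement's English description precedes it below -/
import Mathlib

section
/- Let G be a finite group and let 0 → A → B → C → 0 be a short exact sequence of ℤ[G]-modules that are finitely generated as abelian groups. Suppose that C is stably a permutation G-lattice and that for every subgroup H ≤ G the induced map on group cohomology H¹(H, A) → H¹(H, B) is injective. Then the short exact sequence splits as a sequence of ℤ[G]-modules. -/
/-- `f : G → M` is a 1-cocycle for the action of `G` on `M`. -/
def IsOneCocycle {G M : Type} [Group G] [AddCommGroup M] [DistribMulAction G M]
    (f : G → M) : Prop :=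
  ∀ g h : G, f (g * h) = f g + g • f h

/-- `f : G → M` is a 1-coboundary for the action of `G` on `M`. -/
def IsOneCoboundary {G M : Type} [Group G] [AddCommGroup M] [DistribMulAction G M]
    (f : G → M) : Prop :=
  ∃ m : M, ∀ g : G, f g = g • m - m

/-- `C` is stably a permutation `G`-lattice: there are permutation `G`-lattices
(free `ℤ`-modules on finite `G`-sets `ι`, `ι'`) `P = ι →₀ ℤ` and `P' = ι' →₀ ℤ` together
with a `G`-equivariant isomorphism `C ⊕ P ≅ P'` of `ℤ[G]`-modules. -/
def IsStablyPermutation (G C : Type) [Group G] [AddCommGroup C] [DistribMulAction G C] :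
    Prop :=
  ∃ (ι ι' : Type), Finite ι ∧ Finite ι' ∧
    ∃ (σ : G →* Equiv.Perm ι) (σ' : G →* Equiv.Perm ι')
      (e : C × (ι →₀ ℤ) ≃+ (ι' →₀ ℤ)),
      ∀ (g : G) (c : C) (x : ι →₀ ℤ),
        e (g • c, Finsupp.equivMapDomain (σ g) x) = Finsupp.equivMapDomain (σ' g) (e (c, x))

/-!
Write `C × P ≃ P'` with `P`, `P'` permutation lattices. The map `B × P → P'` is then surjective
with kernel `A`, and an equivariant section of it restricts to one of `p`. A homomorphism out of the
permutation lattice `ℤ[ι']` is an equivariant choice of images of the basis vectors, which exists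
as soon as each basis vector `i` has a lift fixed by its stabilizer `G_i` (choose lifts on orbit
representatives and translate them). Such lifts exist by the hypothesis on `H¹`: if `x` is any lift
of a `G_i`-fixed vector, `h ↦ h • x - x` is a cocycle with values in `A` that is a coboundary in
`B`, hence equals `h ↦ h • a - a` for some `a ∈ A`, and `x - a` is a `G_i`-fixed lift.
-/

open MulAction

-- `G` acts on `ι →₀ ℤ` by permuting the basis vectors `single i 1`.
attribute [local instance] Finsupp.comapDistribMulAction

theorem IsOneCoboundary.map {G M N : Type} [Group G] [AddCommGroup M] [DistribMulAction G M]
    [AddCommGroup N] [DistribMulAction G N] {c : G → M} (hc : IsOneCoboundary c) (φ : M →+ N)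
    (hφ : ∀ (g : G) (m : M), φ (g • m) = g • φ m) : IsOneCoboundary fun g => φ (c g) := by
  obtain ⟨m, hm⟩ := hc
  exact ⟨φ m, fun g => by simp only [hm, map_sub, hφ]⟩

theorem exists_fixed_lift_of_H1_injective {G A M N : Type} [Group G]
    [AddCommGroup A] [DistribMulAction G A] [AddCommGroup M] [DistribMulAction G M]
    [AddCommGroup N] [DistribMulAction G N] {f : A →+ M} {q : M →+ N}
    (hf : ∀ (g : G) (a : A), f (g • a) = g • f a) (hq : ∀ (g : G) (m : M), q (g • m) = g • q m)
    (hfinj : Function.Injective f) (hex : Function.Exact f q)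
    (hH1 : ∀ c : G → A, IsOneCocycle c → IsOneCoboundary (fun g => f (c g)) → IsOneCoboundary c)
    {x₀ : M} (hfix : ∀ g : G, g • q x₀ = q x₀) :
    ∃ x : M, q x = q x₀ ∧ ∀ g : G, g • x = x := by
  have hdiff (g : G) : ∃ a, f a = g • x₀ - x₀ :=
    (hex _).mp (by rw [map_sub, hq, hfix, sub_self])
  choose c hc using hdiff
  have hcoc : IsOneCocycle c := fun g h => hfinj <| by
    rw [map_add, hf, hc, hc, hc, mul_smul, smul_sub]
    abel
  obtain ⟨m, hm⟩ := hH1 c hcoc ⟨x₀, hc⟩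
  refine ⟨x₀ - f m, by rw [map_sub, hex.apply_apply_eq_zero, sub_zero], fun g => ?_⟩
  have hcg := hc g
  rw [hm, map_sub, hf] at hcg
  rw [smul_sub, sub_eq_sub_iff_sub_eq_sub, ← hcg]

theorem MulAction.exists_equivariant_choice {G ι M : Type*} [Group G] [MulAction G ι]
    [MulAction G M] {R : ι → M → Prop} (hR : ∀ (g : G) i x, R i x → R (g • i) (g • x))
    (h : ∀ i, ∃ x, R i x ∧ ∀ g ∈ stabilizer G i, g • x = x) :
    ∃ b : ι → M, (∀ i, R i (b i)) ∧ ∀ (g : G) i, b (g • i) = g • b i := by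
  choose x hxR hxfix using h
  let r (i : ι) : ι := (⟦i⟧ : Quotient (orbitRel G ι)).out
  have hr_smul (g : G) (i : ι) : r (g • i) = r i :=
    congrArg Quotient.out (Quotient.sound (mem_orbit i g))
  have hr (i : ι) : ∃ g : G, g • r i = i := by
    obtain ⟨g, hg⟩ := Quotient.mk_out (s := orbitRel G ι) i
    exact ⟨g⁻¹, inv_smul_eq_iff.mpr hg.symm⟩
  choose w hw using hr
  refine ⟨fun i => w i • x (r i), fun i => ?_, fun g i => ?_⟩
  · simpa only [hw] using hR (w i) _ _ (hxR (r i))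
  · have hstab : (w (g • i))⁻¹ * g * w i ∈ stabilizer G (r i) := by
      rw [mem_stabilizer_iff, mul_smul, mul_smul, hw, inv_smul_eq_iff, ← hr_smul g i, hw]
    calc w (g • i) • x (r (g • i))
        = w (g • i) • ((w (g • i))⁻¹ * g * w i) • x (r i) := by
          rw [hr_smul, hxfix _ _ hstab]
      _ = g • w i • x (r i) := by
          rw [smul_smul, smul_smul, mul_assoc, mul_inv_cancel_left]

theorem Finsupp.liftAddHom_zmultiples_smul {G ι M : Type*} [Group G] [MulAction G ι]
    [AddCommGroup M] [DistribMulAction G M] {b : ι → M} (hb : ∀ (g : G) i, b (g • i) = g • b i)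
    (g : G) (y : ι →₀ ℤ) :
    liftAddHom (fun i => zmultiplesHom M (b i)) (g • y) =
      g • liftAddHom (fun i => zmultiplesHom M (b i)) y := by
  induction y using Finsupp.induction_linear with
  | zero => simp only [smul_zero, map_zero]
  | add y y' hy hy' => simp only [smul_add, map_add, hy, hy']
  | single i n =>
    simp only [comapSMul_single, liftAddHom_apply_single, zmultiplesHom_apply, hb, smul_comm g n]

theorem exists_equivariant_section_of_stabilizer_fixed_lifts {G ι M : Type*} [Group G]
    [MulAction G ι] [AddCommGroup M] [DistribMulAction G M] (q : M →+ (ι →₀ ℤ))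
    (hq : ∀ (g : G) (m : M), q (g • m) = g • q m)
    (h : ∀ i, ∃ x, q x = Finsupp.single i 1 ∧ ∀ g ∈ stabilizer G i, g • x = x) :
    ∃ s : (ι →₀ ℤ) →+ M, (∀ (g : G) y, s (g • y) = g • s y) ∧ ∀ y, q (s y) = y := by
  obtain ⟨b, hqb, hb⟩ := exists_equivariant_choice (R := fun i x => q x = Finsupp.single i 1)
    (fun g i x hx => by rw [hq, hx, Finsupp.comapSMul_single]) h
  let s := Finsupp.liftAddHom fun i => zmultiplesHom M (b i)
  have hqs : q.comp s = AddMonoidHom.id _ := Finsupp.addHom_ext fun i n => by simp [s, hqb]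
  exact ⟨s, Finsupp.liftAddHom_zmultiples_smul hb, DFunLike.congr_fun hqs⟩

theorem exists_equivariant_section_of_H1_injective {G A M ι : Type} [Group G] [MulAction G ι]
    [AddCommGroup A] [DistribMulAction G A] [AddCommGroup M] [DistribMulAction G M]
    {f : A →+ M} {q : M →+ (ι →₀ ℤ)}
    (hf : ∀ (g : G) (a : A), f (g • a) = g • f a) (hq : ∀ (g : G) (m : M), q (g • m) = g • q m)
    (hfinj : Function.Injective f) (hqsurj : Function.Surjective q) (hex : Function.Exact f q)
    (hH1 : ∀ (i : ι) (c : stabilizer G i → A), IsOneCocycle c →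
      IsOneCoboundary (fun h => f (c h)) → IsOneCoboundary c) :
    ∃ s : (ι →₀ ℤ) →+ M, (∀ (g : G) y, s (g • y) = g • s y) ∧ ∀ y, q (s y) = y := by
  refine exists_equivariant_section_of_stabilizer_fixed_lifts q hq fun i => ?_
  obtain ⟨x₀, hx₀⟩ := hqsurj (Finsupp.single i 1)
  obtain ⟨x, hx, hfix⟩ := exists_fixed_lift_of_H1_injective (G := stabilizer G i)
    (fun g => hf g) (fun g => hq g) hfinj hex (hH1 i)
    (x₀ := x₀) fun g => by rw [hx₀, Subgroup.smul_def, Finsupp.comapSMul_single, g.2]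
  exact ⟨x, hx.trans hx₀, fun g hg => hfix ⟨g, hg⟩⟩

theorem IsStablyPermutation.exists_equivariant_addEquiv {G C : Type} [Group G] [AddCommGroup C]
    [DistribMulAction G C] (hC : IsStablyPermutation G C) :
    ∃ (ι ι' : Type) (_ : MulAction G ι) (_ : MulAction G ι') (e : C × (ι →₀ ℤ) ≃+ (ι' →₀ ℤ)),
      ∀ (g : G) (x : C × (ι →₀ ℤ)), e (g • x) = g • e x := by
  obtain ⟨ι, ι', -, -, σ, σ', e, he⟩ := hC
  let := MulAction.compHom ι σ
  let := MulAction.compHom ι' σ'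
  refine ⟨ι, ι', inferInstance, inferInstance, e, fun g x => ?_⟩
  have hgx := he g x.1 x.2
  rw [Finsupp.equivMapDomain_eq_mapDomain, Finsupp.equivMapDomain_eq_mapDomain] at hgx
  exact hgx

theorem Function.Exact.inl_comp_prodMap_id {A B C P : Type*} [AddZeroClass A] [AddZeroClass B]
    [AddZeroClass C] [AddZeroClass P] {f : A →+ B} {p : B →+ C} (h : Function.Exact f p) :
    Function.Exact ((AddMonoidHom.inl B P).comp f) (p.prodMap (AddMonoidHom.id P)) := by
  rintro ⟨b, x⟩
  simp only [AddMonoidHom.coe_prodMap, AddMonoidHom.coe_id, Prod.map_apply, id_eq, Prod.mk_eq_zero,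
    h b, Set.mem_range, AddMonoidHom.coe_comp, Function.comp_apply, AddMonoidHom.inl_apply,
    Prod.mk.injEq, exists_and_right]
  exact and_congr_right' eq_comm

theorem splits_of_stablyPermutation_of_H1_injective_general
    {G A B C : Type} [Group G]
    [AddCommGroup A] [DistribMulAction G A]
    [AddCommGroup B] [DistribMulAction G B]
    [AddCommGroup C] [DistribMulAction G C]
    (f : A →+ B) (p : B →+ C)
    (hfG : ∀ (g : G) (a : A), f (g • a) = g • f a)
    (hpG : ∀ (g : G) (b : B), p (g • b) = g • p b)
    (hfinj : Function.Injective f) (hpsurj : Function.Surjective p)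
    (hex : Function.Exact f p)
    (hC : IsStablyPermutation G C)
    (hH1 : ∀ (H : Subgroup G) (c : H → A), IsOneCocycle c →
      IsOneCoboundary (fun h : H => f (c h)) → IsOneCoboundary c) :
    ∃ s : C →+ B, (∀ (g : G) (c : C), s (g • c) = g • s c) ∧ ∀ c : C, p (s c) = c := by
  obtain ⟨ι, ι', _, _, e, he⟩ := hC.exists_equivariant_addEquiv
  let q : B × (ι →₀ ℤ) →+ (ι' →₀ ℤ) := e.toAddMonoidHom.comp (p.prodMap (.id _))
  have hq (g : G) (x : B × (ι →₀ ℤ)) : q (g • x) = g • q x := by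
    change e (p (g • x.1), g • x.2) = g • e (p x.1, x.2)
    rw [hpG]
    exact he g (p x.1, x.2)
  obtain ⟨s, hsG, hqs⟩ := exists_equivariant_section_of_H1_injective
    (f := (AddMonoidHom.inl B (ι →₀ ℤ)).comp f) (fun g a => by simp [hfG]) hq
    ((Prod.mk_left_injective 0).comp hfinj)
    (e.surjective.comp (Prod.map_surjective.mpr ⟨hpsurj, Function.surjective_id⟩))
    (hex.inl_comp_prodMap_id.comp_injective _ e.injective e.map_zero)
    (fun i c hc hcb => hH1 _ c hc (hcb.map (.fst B _) fun _ _ => rfl))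
  refine ⟨(AddMonoidHom.fst B _).comp (s.comp (e.toAddMonoidHom.comp (.inl C _))),
    fun g c => ?_, fun c => congrArg Prod.fst (e.injective (hqs (e (c, 0))))⟩
  have hgc : ((g • c, 0) : C × (ι →₀ ℤ)) = g • (c, 0) := by rw [Prod.smul_mk, smul_zero]
  change (s (e (g • c, 0))).1 = g • (s (e (c, 0))).1
  rw [hgc, he, hsG, Prod.smul_fst]

/-- Let `G` be a finite group and `0 → A → B → C → 0` a short exact sequence of
`ℤ[G]`-modules which are finitely generated as abelian groups.  If `C` is stably a
permutation `G`-lattice and for every subgroup `H ≤ G` the induced map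
`H¹(H, A) → H¹(H, B)` is injective (every 1-cocycle of `H` in `A` whose image in `B` is a
coboundary is itself a coboundary), then the sequence splits as a sequence of
`ℤ[G]`-modules. -/
theorem splits_of_stablyPermutation_of_H1_injective
    {G A B C : Type} [Group G] [Finite G]
    [AddCommGroup A] [DistribMulAction G A] [Module.Finite ℤ A]
    [AddCommGroup B] [DistribMulAction G B] [Module.Finite ℤ B]
    [AddCommGroup C] [DistribMulAction G C] [Module.Finite ℤ C]
    (f : A →+ B) (p : B →+ C)
    (hfG : ∀ (g : G) (a : A), f (g • a) = g • f a)
    (hpG : ∀ (g : G) (b : B), p (g • b) = g • p b)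
    (hfinj : Function.Injective f) (hpsurj : Function.Surjective p)
    (hex : Function.Exact f p)
    (hC : IsStablyPermutation G C)
    (hH1 : ∀ (H : Subgroup G) (c : H → A), IsOneCocycle c →
      IsOneCoboundary (fun h : H => f (c h)) → IsOneCoboundary c) :
    ∃ s : C →+ B, (∀ (g : G) (c : C), s (g • c) = g • s c) ∧ ∀ c : C, p (s c) = c :=
  splits_of_stablyPermutation_of_H1_injective_general f p hfG hpG hfinj hpsurj hex hC hH1
end

section
/- Let C be a local ring which is a unique factorization domain, let B be a discrete valuation ring, and let φ : C → B be a local ring homomorphism (φ maps the maximal ideal of C into the maximal ideal of B). If c ∈ C is an element such that φ(c) is a uniformizer of B (i.e., φ(c) has valuation 1), then c is an irreducible, hence prime, element of C. -/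
theorem irreducible_and_prime_of_map_uniformizer_general
    {C B : Type} [CommRing C] [IsDomain C] [UniqueFactorizationMonoid C]
    [CommRing B] [IsDomain B] [IsDiscreteValuationRing B]
    (φ : C →+* B) (hφ : IsLocalHom φ) (c : C)
    (hc : IsLocalRing.maximalIdeal B = Ideal.span {φ c}) :
    Irreducible c ∧ Prime c := by
  have hφc : Irreducible (φ c) := (IsDiscreteValuationRing.irreducible_iff_uniformizer _).mpr hc
  have hirr : Irreducible c := Irreducible.of_map (f := φ) hφc
  exact ⟨hirr, UniqueFactorizationMonoid.irreducible_iff_prime.mp hirr⟩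

/-- If `C` is a local UFD, `B` a discrete valuation ring, `φ : C → B` a local ring
homomorphism, and `c : C` maps to a uniformizer of `B` (a generator of the maximal
ideal, i.e. an element of valuation 1), then `c` is irreducible, hence prime, in `C`. -/
theorem irreducible_and_prime_of_map_uniformizer
    {C B : Type} [CommRing C] [IsLocalRing C] [IsDomain C] [UniqueFactorizationMonoid C]
    [CommRing B] [IsDomain B] [IsDiscreteValuationRing B]
    (φ : C →+* B) (hφ : IsLocalHom φ) (c : C)
    (hc : IsLocalRing.maximalIdeal B = Ideal.span {φ c}) :
    Irreducible c ∧ Prime c :=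
  irreducible_and_prime_of_map_uniformizer_general φ hφ c hc
end

section
/- Let k ⊆ l be a field extension such that k is algebraically closed in l (every element of l algebraic over k lies in k). Let D be an integral domain containing k that is integrally closed in its fraction field, and suppose there is a k-algebra homomorphism D → l. Then k is algebraically closed in the fraction field Frac(D): every element of Frac(D) algebraic over k lies in k. -/
/-- Let `k ⊆ l` be a field extension with `k` algebraically closed in `l`.  Let `D` be an
integral domain containing `k` which is integrally closed in its fraction field `K`, and
suppose there is a `k`-algebra homomorphism `D → l`.  Then `k` is algebraically closed in
the fraction field `K` of `D`: every element of `K` algebraic over `k` lies in `k`. -/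
theorem algClosedIn_fractionField_of_algHom
    {k l D K : Type} [Field k] [Field l] [Algebra k l]
    [CommRing D] [IsDomain D] [Algebra k D] [IsIntegrallyClosed D]
    [Field K] [Algebra D K] [IsFractionRing D K] [Algebra k K] [IsScalarTower k D K]
    (hkl : ∀ x : l, IsAlgebraic k x → ∃ a : k, algebraMap k l a = x)
    (ψ : D →ₐ[k] l) :
    ∀ x : K, IsAlgebraic k x → ∃ a : k, algebraMap k K a = x := by
  intro x hx
  have hxint : IsIntegral k x := hx.isIntegral
  have hxD : IsIntegral D x := hxint.tower_top
  obtain ⟨d, hd⟩ := IsIntegrallyClosed.isIntegral_iff.mp hxD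
  have hinj : Function.Injective (algebraMap D K) := IsFractionRing.injective D K
  have hdint : IsIntegral k d := by
    apply IsIntegral.tower_bot hinj
    rw [hd]; exact hxint
  -- ψ d is algebraic over k
  have hψd : IsIntegral k (ψ d) := hdint.map ψ
  obtain ⟨a, ha⟩ := hkl (ψ d) hψd.isAlgebraic
  -- minimal polynomial argument
  set p := minpoly k d with hp
  have hroot : Polynomial.aeval (ψ d) p = 0 := by
    rw [Polynomial.aeval_algHom_apply, minpoly.aeval, map_zero]
  have hdvd : minpoly k (ψ d) ∣ p := minpoly.dvd k (ψ d) hroot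
  have hmin : minpoly k (ψ d) = Polynomial.X - Polynomial.C a := by
    rw [← ha]; exact minpoly.eq_X_sub_C l a
  rw [hmin] at hdvd
  have hirr : Irreducible p := minpoly.irreducible hdint
  have hassoc : Associated (Polynomial.X - Polynomial.C a) p :=
    (Polynomial.irreducible_X_sub_C a).associated_of_dvd hirr hdvd
  have hpeq : p = Polynomial.X - Polynomial.C a :=
    (Polynomial.eq_of_monic_of_associated (Polynomial.monic_X_sub_C a)
      (minpoly.monic hdint) hassoc).symm
  have : Polynomial.aeval d p = 0 := minpoly.aeval k d
  rw [hpeq] at this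
  simp only [map_sub, Polynomial.aeval_X, Polynomial.aeval_C] at this
  have hda : d = algebraMap k D a := by linear_combination this
  refine ⟨a, ?_⟩
  rw [IsScalarTower.algebraMap_apply k D K, ← hda, hd]
end
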